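/- arXiv:1001.2767 — 3 statements merged into one kernel-verified Lean document; each statement's English description precedes it below -/
import Mathlib

section
/- The range-restricted geometric mechanism matrix G_{n,α} has positive determinant: for the (n+1)×(n+1) matrix with (i,j)-entry equal to α^{|i-j|}/(1+α) if j ∈ {0,n} and ((1-α)/(1+α))·α^{|i-j|} otherwise, det(G_{n,α}) > 0. -/
/-!
`G_{n,α}` is the Kac–Murdock–Szegő matrix `(α ^ |i - j|)` with its columns rescaled by positive
weights (`1 / (1 + α)` on the two boundary columns, `(1 - α) / (1 + α)` on the others). The KMS
matrix has determinant `(1 - α²) ^ n`: subtracting `α` times row `1` from row `0` leaves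
`(1 - α², 0, …, 0)` there, and the remaining minor is again a KMS matrix.
-/

open Matrix

namespace Matrix

variable {R : Type*} [CommRing R]

theorem det_succ_of_row_zero_eq_single {n : ℕ} (A : Matrix (Fin (n + 1)) (Fin (n + 1)) R) {c : R}
    (h : A 0 = Pi.single 0 c) : A.det = c * (A.submatrix Fin.succ Fin.succ).det := by
  rw [det_succ_row_zero, Fin.sum_univ_succ, h]
  simp [Fin.succAbove_zero]

/-- The Kac–Murdock–Szegő matrix `(a ^ |i - j|)`. -/
def kms (n : ℕ) (a : R) : Matrix (Fin n) (Fin n) R :=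
  of fun i j => a ^ ((i : ℤ) - (j : ℤ)).natAbs

theorem kms_submatrix_succ_succ (n : ℕ) (a : R) :
    (kms (n + 1) a).submatrix Fin.succ Fin.succ = kms n a := by
  ext i j
  simp only [kms, submatrix_apply, of_apply, Fin.val_succ]
  congr 1
  omega

theorem kms_row_zero_add_neg_smul_row_one (n : ℕ) (a : R) :
    kms (n + 2) a 0 + (-a) • kms (n + 2) a 1 = Pi.single 0 (1 - a ^ 2) := by
  ext j
  cases j using Fin.cases with
  | zero => simp [kms, sq, sub_eq_add_neg]
  | succ k =>
    have h0 : ((0 : ℤ) - ((k : ℕ) + 1 : ℕ)).natAbs = k + 1 := by omega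
    have h1 : ((1 : ℤ) - ((k : ℕ) + 1 : ℕ)).natAbs = k := by omega
    simp only [Pi.add_apply, Pi.smul_apply, smul_eq_mul, kms, of_apply, Fin.val_zero, Fin.val_one,
      Fin.val_succ, Nat.cast_zero, Nat.cast_one, h0, h1, Pi.single_eq_of_ne (Fin.succ_ne_zero k)]
    ring

theorem det_kms (n : ℕ) (a : R) : (kms (n + 1) a).det = (1 - a ^ 2) ^ n := by
  induction n with
  | zero => simp [kms]
  | succ n ih =>
    rw [← det_updateRow_add_smul_self (kms (n + 2) a) (i := 0) (j := 1) Fin.zero_ne_one (-a),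
      det_succ_of_row_zero_eq_single _ (by rw [updateRow_self, kms_row_zero_add_neg_smul_row_one]),
      ← Fin.succAbove_zero, submatrix_updateRow_succAbove, Fin.succAbove_zero,
      kms_submatrix_succ_succ, ih, pow_succ' (1 - a ^ 2) n]

end Matrix

theorem det_geom_pos_general (n : ℕ) (α : ℝ) (h0 : 0 < α) (h1 : α < 1)
    (G : Matrix (Fin (n + 1)) (Fin (n + 1)) ℝ)
    (hG : ∀ i j, G i j =
      if (j : ℕ) = 0 ∨ (j : ℕ) = n then α ^ ((i : ℤ) - (j : ℤ)).natAbs / (1 + α)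
      else ((1 - α) / (1 + α)) * α ^ ((i : ℤ) - (j : ℤ)).natAbs) :
    0 < G.det := by
  set w : Fin (n + 1) → ℝ :=
    fun j => if (j : ℕ) = 0 ∨ (j : ℕ) = n then 1 / (1 + α) else (1 - α) / (1 + α)
  have hG_eq : G = kms (n + 1) α * diagonal w := by
    ext i j
    rw [mul_diagonal, hG]
    simp only [kms, of_apply, w]
    split_ifs <;> ring
  have hw : ∀ j, 0 < w j := fun j => by
    simp only [w]
    split_ifs <;> exact div_pos (by linarith) (by linarith)
  have hα : 0 < 1 - α ^ 2 := by nlinarith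
  rw [hG_eq, det_mul, det_diagonal, det_kms]
  exact mul_pos (pow_pos hα n) (Finset.prod_pos fun j _ => hw j)

/-- The range-restricted geometric mechanism matrix `G_{n,α}` has positive
determinant. -/
theorem det_geom_pos (n : ℕ) (hn : 1 ≤ n) (α : ℝ) (h0 : 0 < α) (h1 : α < 1)
    (G : Matrix (Fin (n + 1)) (Fin (n + 1)) ℝ)
    (hG : ∀ i j, G i j =
      if (j : ℕ) = 0 ∨ (j : ℕ) = n then α ^ ((i : ℤ) - (j : ℤ)).natAbs / (1 + α)
      else ((1 - α) / (1 + α)) * α ^ ((i : ℤ) - (j : ℤ)).natAbs) :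
    0 < G.det :=
  det_geom_pos_general n α h0 h1 G hG
end

section
/- Replacing an interior column: for 2 ≤ i ≤ n-1 and any vector x = (x_1,…,x_n)ᵀ, the determinant of the matrix obtained from G'_{n,α} (entries α^{|r-c|}) by replacing its i-th column by x equals (1-α²)^{n-2}·((1+α²)·x_i - α·(x_{i-1} + x_{i+1})). -/
/-!
`G = (α ^ |r - c|)` is the Kac–Murdock–Szegő matrix. Subtracting `α` times the next row and
expanding gives `det G = (1 - α²) ^ (n + 1)`, and its inverse is tridiagonal: for an interior
index `i`, `v = (1 + α²) eᵢ - α e_{i-1} - α e_{i+1}` satisfies `vᵀ G = (1 - α²) eᵢᵀ`. Hence row `i`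
of `adj G = det G • G⁻¹` is `(1 - α²) ^ n • v`, and by Cramer's rule the determinant of `G` with
column `i` replaced by `x` is `(adj G *ᵥ x) i = (1 - α²) ^ n * (v ⬝ᵥ x)`.
-/

open Matrix

section PowNatAbs

variable {R : Type*} [CommRing R] (α : R)

lemma pow_natAbs_sub_mul_pow_natAbs_add_one {t : ℤ} (ht : t ≤ 0) :
    α ^ t.natAbs - α * α ^ (t + 1).natAbs = if t = 0 then 1 - α ^ 2 else 0 := by
  obtain rfl | ht' := ht.eq_or_lt
  · simp; ring
  · obtain ⟨d, hd, hd1⟩ : ∃ d : ℕ, t.natAbs = d + 1 ∧ (t + 1).natAbs = d :=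
      ⟨(t + 1).natAbs, by omega, rfl⟩
    rw [hd, hd1, if_neg ht'.ne]
    ring

lemma one_add_sq_mul_pow_natAbs_sub (t : ℤ) :
    (1 + α ^ 2) * α ^ t.natAbs - α * α ^ (t - 1).natAbs - α * α ^ (t + 1).natAbs =
      if t = 0 then 1 - α ^ 2 else 0 := by
  rcases lt_trichotomy t 0 with ht | rfl | ht
  · obtain ⟨d, h, hm, hp⟩ : ∃ d : ℕ, t.natAbs = d + 1 ∧ (t - 1).natAbs = d + 2 ∧
        (t + 1).natAbs = d := ⟨(t + 1).natAbs, by omega, by omega, rfl⟩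
    rw [h, hm, hp, if_neg ht.ne]
    ring
  · simp; ring
  · obtain ⟨d, h, hm, hp⟩ : ∃ d : ℕ, t.natAbs = d + 1 ∧ (t - 1).natAbs = d ∧
        (t + 1).natAbs = d + 2 := ⟨(t - 1).natAbs, by omega, rfl, by omega⟩
    rw [h, hm, hp, if_neg ht.ne']
    ring

end PowNatAbs

namespace Matrix

variable {R : Type*} [CommRing R]

lemma smul_adjugate_row_of_vecMul_eq {n : Type*} [Fintype n] [DecidableEq n]
    {A : Matrix n n R} {v : n → R} {c : R} {i : n} (h : v ᵥ* A = c • Pi.single i 1) :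
    c • A.adjugate i = A.det • v := by
  calc c • A.adjugate i = (c • Pi.single i 1) ᵥ* A.adjugate := by
        rw [smul_vecMul, single_one_vecMul]; rfl
    _ = A.det • v := by rw [← h, vecMul_vecMul, mul_adjugate, vecMul_smul, vecMul_one]

def kacMurdockSzego (m : ℕ) (α : R) : Matrix (Fin m) (Fin m) R :=
  of fun r c => α ^ ((r : ℤ) - c).natAbs

@[simp]
lemma kacMurdockSzego_apply (m : ℕ) (α : R) (r c : Fin m) :
    kacMurdockSzego m α r c = α ^ ((r : ℤ) - c).natAbs := rfl

lemma submatrix_succ_kacMurdockSzego (m : ℕ) (α : R) :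
    (kacMurdockSzego (m + 2) α).submatrix Fin.succ Fin.succ = kacMurdockSzego (m + 1) α := by
  ext r c
  simp only [submatrix_apply, kacMurdockSzego_apply, Fin.val_succ, Nat.cast_succ,
    add_sub_add_right_eq_sub]

theorem det_kacMurdockSzego (α : R) (m : ℕ) :
    (kacMurdockSzego (m + 1) α).det = (1 - α ^ 2) ^ m := by
  induction m with
  | zero => simp
  | succ m ih =>
    have hrow : kacMurdockSzego (m + 2) α 0 + (-α) • kacMurdockSzego (m + 2) α 1 =
        fun c => if c = 0 then 1 - α ^ 2 else 0 := by
      ext c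
      have h := pow_natAbs_sub_mul_pow_natAbs_add_one α (t := -(c : ℤ)) (by omega)
      have h0 : (0 : ℤ) - c = -c := zero_sub _
      have h1 : (1 : ℤ) - c = -c + 1 := by ring
      simp only [Pi.add_apply, Pi.smul_apply, smul_eq_mul, kacMurdockSzego_apply,
        Fin.val_zero, Fin.val_one, Nat.cast_zero, Nat.cast_one, h0, h1]
      rw [neg_mul, ← sub_eq_add_neg, h]
      simp only [neg_eq_zero, Nat.cast_eq_zero, Fin.val_eq_zero_iff]
    rw [← det_updateRow_add_smul_self _ Fin.zero_ne_one (-α), det_succ_row_zero,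
      Fin.sum_univ_succ, updateRow_self, hrow]
    simp only [Fin.succ_ne_zero, if_true, if_false, mul_zero, zero_mul, Finset.sum_const_zero,
      add_zero, Fin.val_zero, pow_zero, one_mul]
    rw [← Fin.succAbove_zero, submatrix_updateRow_succAbove, Fin.succAbove_zero,
      submatrix_succ_kacMurdockSzego, ih, ← pow_succ']

lemma vecMul_kacMurdockSzego_of_interior {m : ℕ} (α : R) {i j k : Fin m}
    (hj : (j : ℕ) + 1 = i) (hk : (i : ℕ) + 1 = k) :
    ((1 + α ^ 2) • Pi.single i 1 - α • Pi.single j 1 - α • Pi.single k 1) ᵥ*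
      kacMurdockSzego m α = (1 - α ^ 2) • Pi.single i 1 := by
  ext c
  have hj' : (j : ℤ) - c = (i - c) - 1 := by omega
  have hk' : (k : ℤ) - c = (i - c) + 1 := by omega
  simp only [sub_vecMul, smul_vecMul, single_one_vecMul, Pi.sub_apply, Pi.smul_apply,
    smul_eq_mul, row_apply, kacMurdockSzego_apply, hj', hk', one_add_sq_mul_pow_natAbs_sub]
  simp [Pi.single_apply, sub_eq_zero, Fin.ext_iff, eq_comm]

end Matrix

/-- Replacing an interior column `i` (with `1 ≤ i ≤ n` in zero-based indexing of
an `(n+2)×(n+2)` matrix) of `G'_{n,α}` (entries `α^{|r-c|}`) by a vector `x`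
gives determinant `(1-α²)^{n}·((1+α²)·x_i - α·(x_{i-1} + x_{i+1}))`. -/
theorem det_update_interior_column (n : ℕ) (α : ℝ) (h0 : 0 < α) (h1 : α < 1)
    (G : Matrix (Fin (n + 2)) (Fin (n + 2)) ℝ)
    (hG : ∀ i j, G i j = α ^ ((i : ℤ) - (j : ℤ)).natAbs)
    (x : Fin (n + 2) → ℝ) (i : Fin (n + 2)) (hi1 : 1 ≤ (i : ℕ)) (hi2 : (i : ℕ) ≤ n) :
    (G.updateCol i x).det =
      (1 - α ^ 2) ^ n *
        ((1 + α ^ 2) * x i - α * (x ⟨(i : ℕ) - 1, by omega⟩ + x ⟨(i : ℕ) + 1, by omega⟩)) := by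
  obtain rfl : G = kacMurdockSzego (n + 2) α := Matrix.ext hG
  set j : Fin (n + 2) := ⟨(i : ℕ) - 1, by omega⟩
  set k : Fin (n + 2) := ⟨(i : ℕ) + 1, by omega⟩
  set v : Fin (n + 2) → ℝ := (1 + α ^ 2) • Pi.single i 1 - α • Pi.single j 1 - α • Pi.single k 1
  have hα : 1 - α ^ 2 ≠ 0 := by nlinarith
  have hadj : (kacMurdockSzego (n + 2) α).adjugate i = (1 - α ^ 2) ^ n • v := by
    apply smul_right_injective _ hα
    dsimp only
    rw [smul_adjugate_row_of_vecMul_eq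
      (vecMul_kacMurdockSzego_of_interior α (j := j) (k := k) (by simp [j]; omega) rfl),
      det_kacMurdockSzego, smul_smul, ← pow_succ']
  rw [← cramer_apply, cramer_eq_adjugate_mulVec, mulVec, hadj]
  simp only [v, smul_dotProduct, sub_dotProduct, single_dotProduct, smul_eq_mul, one_mul]
  ring
end

section
/- Characterization of derivability from the geometric mechanism: an (n+1)×(n+1) row-stochastic matrix M can be written as M = G_{n,α}·T for some row-stochastic matrix T if and only if every three consecutive entries x₁, x₂, x₃ in any column of M satisfy (1+α²)·x₂ - α·(x₁ + x₃) ≥ 0, and every column satisfies x₁ ≥ α·x₂ at the top (first two entries) and x_{n+1} ≥ α·x_n at the bottom. -/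
/-!
Write `P = (α ^ |i - j|)` for the Kac–Murdock–Szegő matrix. Then `G_{n,α} = P · D` with `D` a
positive diagonal matrix, and `P` has the tridiagonal inverse `(1 - α²)⁻¹ K`, where `K` has
diagonal `1, 1 + α², …, 1 + α², 1` and off-diagonal entries `-α`. Hence `G_{n,α}` is
invertible, `M = G_{n,α} T` forces `T = D⁻¹ (1 - α²)⁻¹ K M`, and `T ≥ 0` iff `K M ≥ 0`; the
entries of `K M` are exactly the expressions in the column inequalities. The row sums of `T`
are automatically `1`, because `G_{n,α}⁻¹` maps the all-ones vector to itself.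
-/

open Matrix

theorem exists_mem_rowStochastic_mul_eq_iff {m R : Type*} [Fintype m] [DecidableEq m]
    [CommRing R] [PartialOrder R] [IsOrderedRing R] {G B M : Matrix m m R} (hBG : B * G = 1)
    (hB : B *ᵥ 1 = 1) (hM : M *ᵥ 1 = 1) :
    (∃ T ∈ rowStochastic R m, M = G * T) ↔ ∀ i j, 0 ≤ (B * M) i j := by
  constructor
  · rintro ⟨T, hT, rfl⟩
    rw [← Matrix.mul_assoc, hBG, Matrix.one_mul]
    exact (mem_rowStochastic.mp hT).1
  · intro h
    refine ⟨B * M, mem_rowStochastic.mpr ⟨h, ?_⟩, ?_⟩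
    · rw [← mulVec_mulVec, hM, hB]
    · rw [← Matrix.mul_assoc, mul_eq_one_comm.mp hBG, Matrix.one_mul]

theorem Fin.cases_zero_interior_last {n : ℕ} {P : Fin (n + 1) → Prop} (zero : P 0)
    (interior : ∀ m (hm : m + 2 ≤ n), P ⟨m + 1, Nat.lt_succ_of_lt hm⟩)
    (last : P (Fin.last n)) (i : Fin (n + 1)) : P i := by
  obtain ⟨_ | m, hi⟩ := i
  · exact zero
  · by_cases hm : m + 1 = n
    · subst hm
      exact last
    · exact interior m (by omega)

section PowNatAbs

variable {R : Type*} [CommRing R] (α : R)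

lemma pow_natAbs_sub_first_diff {a b : ℕ} (h : a ≤ b) :
    α ^ ((a : ℤ) - b).natAbs - α * α ^ ((a : ℤ) + 1 - b).natAbs =
      if a = b then 1 - α ^ 2 else 0 := by
  rcases h.lt_or_eq with h | rfl
  · rw [show ((a : ℤ) - b).natAbs = b - a - 1 + 1 by omega,
      show ((a : ℤ) + 1 - b).natAbs = b - a - 1 by omega, if_neg h.ne, pow_succ]
    ring
  · simp [sq]

lemma pow_natAbs_sub_last_diff {a b : ℕ} (h : b ≤ a) :
    α ^ ((a : ℤ) - b).natAbs - α * α ^ ((a : ℤ) - 1 - b).natAbs =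
      if a = b then 1 - α ^ 2 else 0 := by
  rcases h.lt_or_eq with h | rfl
  · rw [show ((a : ℤ) - b).natAbs = a - b - 1 + 1 by omega,
      show ((a : ℤ) - 1 - b).natAbs = a - b - 1 by omega, if_neg h.ne', pow_succ]
    ring
  · simp [sq]

lemma pow_natAbs_sub_second_diff (a b : ℕ) :
    (1 + α ^ 2) * α ^ ((a : ℤ) + 1 - b).natAbs -
        α * (α ^ ((a : ℤ) - b).natAbs + α ^ ((a : ℤ) + 2 - b).natAbs) =
      if a + 1 = b then 1 - α ^ 2 else 0 := by
  rcases lt_trichotomy (a + 1) b with h | h | h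
  · rw [show ((a : ℤ) + 1 - b).natAbs = b - a - 2 + 1 by omega,
      show ((a : ℤ) - b).natAbs = b - a - 2 + 2 by omega,
      show ((a : ℤ) + 2 - b).natAbs = b - a - 2 by omega, if_neg h.ne]
    ring
  · rw [if_pos h, show ((a : ℤ) + 1 - b).natAbs = 0 by omega,
      show ((a : ℤ) - b).natAbs = 1 by omega, show ((a : ℤ) + 2 - b).natAbs = 1 by omega]
    ring
  · rw [show ((a : ℤ) + 1 - b).natAbs = a - b + 1 by omega,
      show ((a : ℤ) - b).natAbs = a - b by omega,
      show ((a : ℤ) + 2 - b).natAbs = a - b + 2 by omega, if_neg h.ne']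
    ring

end PowNatAbs

section KMS

variable {R : Type*} [CommRing R]

def kmsMatrix (n : ℕ) (α : R) : Matrix (Fin (n + 1)) (Fin (n + 1)) R :=
  Matrix.of fun i j => α ^ ((i : ℤ) - (j : ℤ)).natAbs

def kmsTridiag (n : ℕ) (α : R) : Matrix (Fin (n + 1)) (Fin (n + 1)) R :=
  fun i =>
    if (i : ℕ) = 0 then Pi.single 0 1 - α • Pi.single 1 1
    else if (i : ℕ) = n then Pi.single i 1 - α • Pi.single (i - 1) 1
    else (1 + α ^ 2) • Pi.single i 1 - α • (Pi.single (i - 1) 1 + Pi.single (i + 1) 1)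

def geomWeight (n : ℕ) (α : R) (j : Fin (n + 1)) : R :=
  if (j : ℕ) = 0 ∨ (j : ℕ) = n then 1 - α else (1 - α) ^ 2

variable {n : ℕ} {α : R}

lemma kmsTridiag_zero_dotProduct (hn : 1 ≤ n) (v : Fin (n + 1) → R) :
    kmsTridiag n α 0 ⬝ᵥ v = v 0 - α * v ⟨1, Nat.succ_lt_succ hn⟩ := by
  have h1 : (1 : Fin (n + 1)) = ⟨1, Nat.succ_lt_succ hn⟩ :=
    Fin.ext (by rw [Fin.val_one', Nat.mod_eq_of_lt (by omega)])
  simp [kmsTridiag, h1, sub_dotProduct, single_dotProduct]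

lemma kmsTridiag_last_dotProduct (hn : 1 ≤ n) (v : Fin (n + 1) → R) :
    kmsTridiag n α (Fin.last n) ⬝ᵥ v =
      v (Fin.last n) - α * v ⟨n - 1, n.sub_lt_succ 1⟩ := by
  have h1 : Fin.last n - 1 = ⟨n - 1, n.sub_lt_succ 1⟩ := by
    ext
    rw [Fin.val_sub_one_of_ne_zero (by simp [Fin.ext_iff]; omega)]
    rfl
  simp [kmsTridiag, h1, show n ≠ 0 by omega, sub_dotProduct, single_dotProduct]

lemma kmsTridiag_interior_dotProduct {m : ℕ} (hm : m + 2 ≤ n) (v : Fin (n + 1) → R) :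
    kmsTridiag n α ⟨m + 1, Nat.lt_succ_of_lt hm⟩ ⬝ᵥ v =
      (1 + α ^ 2) * v ⟨m + 1, Nat.lt_succ_of_lt hm⟩ -
        α * (v ⟨m, Nat.lt_succ_of_lt (Nat.lt_of_succ_lt hm)⟩ +
          v ⟨m + 2, Nat.lt_succ_of_le hm⟩) := by
  have h1 : (⟨m + 1, Nat.lt_succ_of_lt hm⟩ : Fin (n + 1)) - 1 =
      ⟨m, Nat.lt_succ_of_lt (Nat.lt_of_succ_lt hm)⟩ := by
    ext
    rw [Fin.val_sub_one_of_ne_zero (by simp [Fin.ext_iff])]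
    rfl
  have h2 : (⟨m + 1, Nat.lt_succ_of_lt hm⟩ : Fin (n + 1)) + 1 =
      ⟨m + 2, Nat.lt_succ_of_le hm⟩ := by
    ext
    rw [Fin.val_add_one_of_lt' (by simp; omega)]
  simp [kmsTridiag, h1, h2, show m + 1 ≠ n by omega, sub_dotProduct, add_dotProduct,
    single_dotProduct, mul_add]

theorem kmsTridiag_mul_kmsMatrix (hn : 1 ≤ n) :
    kmsTridiag n α * kmsMatrix n α =
      (1 - α ^ 2) • (1 : Matrix (Fin (n + 1)) (Fin (n + 1)) R) := by
  ext i j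
  rw [mul_apply', Matrix.smul_apply, one_apply, smul_eq_mul, mul_ite, mul_one, mul_zero]
  induction i using Fin.cases_zero_interior_last with
  | zero =>
    rw [kmsTridiag_zero_dotProduct hn]
    simpa [kmsMatrix, Fin.ext_iff] using pow_natAbs_sub_first_diff α (Nat.zero_le j)
  | interior m hm =>
    rw [kmsTridiag_interior_dotProduct hm]
    simpa [kmsMatrix, Fin.ext_iff] using pow_natAbs_sub_second_diff α m j
  | last =>
    rw [kmsTridiag_last_dotProduct hn]
    simpa [kmsMatrix, Fin.ext_iff, Nat.cast_sub hn] using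
      pow_natAbs_sub_last_diff α (Nat.lt_succ_iff.mp j.isLt)

lemma kmsTridiag_mulVec_one (hn : 1 ≤ n) : kmsTridiag n α *ᵥ 1 = geomWeight n α := by
  ext i
  induction i using Fin.cases_zero_interior_last with
  | zero => simp [mulVec, kmsTridiag_zero_dotProduct hn, geomWeight]
  | interior m hm =>
    simp [mulVec, kmsTridiag_interior_dotProduct hm, geomWeight, show m + 1 ≠ n by omega]
    ring
  | last => simp [mulVec, kmsTridiag_last_dotProduct hn, geomWeight]

end KMS

theorem forall_nonneg_kmsTridiag_mul_apply_iff {R : Type*} [CommRing R] [PartialOrder R]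
    [IsOrderedRing R] {n : ℕ} {α : R} (hn : 1 ≤ n) (X : Matrix (Fin (n + 1)) (Fin (n + 1)) R)
    (j : Fin (n + 1)) :
    (∀ i, 0 ≤ (kmsTridiag n α * X) i j) ↔
      (∀ m (hm : m + 2 ≤ n), 0 ≤ (1 + α ^ 2) * X ⟨m + 1, Nat.lt_succ_of_lt hm⟩ j -
          α * (X ⟨m, Nat.lt_succ_of_lt (Nat.lt_of_succ_lt hm)⟩ j +
            X ⟨m + 2, Nat.lt_succ_of_le hm⟩ j)) ∧
        α * X ⟨1, Nat.succ_lt_succ hn⟩ j ≤ X 0 j ∧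
        α * X ⟨n - 1, n.sub_lt_succ 1⟩ j ≤ X (Fin.last n) j := by
  simp only [mul_apply']
  constructor
  · intro h
    refine ⟨fun m hm => ?_, ?_, ?_⟩
    · simpa [kmsTridiag_interior_dotProduct hm] using h ⟨m + 1, Nat.lt_succ_of_lt hm⟩
    · simpa [kmsTridiag_zero_dotProduct hn] using h 0
    · simpa [kmsTridiag_last_dotProduct hn] using h (Fin.last n)
  · rintro ⟨hinterior, hzero, hlast⟩ i
    induction i using Fin.cases_zero_interior_last with
    | zero => simpa [kmsTridiag_zero_dotProduct hn] using hzero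
    | interior m hm => simpa [kmsTridiag_interior_dotProduct hm] using hinterior m hm
    | last => simpa [kmsTridiag_last_dotProduct hn] using hlast

section GeomMechanism

variable {K : Type*} [Field K] {n : ℕ} {α : K}

def geomMechanism (n : ℕ) (α : K) : Matrix (Fin (n + 1)) (Fin (n + 1)) K :=
  Matrix.of fun i j =>
    if (j : ℕ) = 0 ∨ (j : ℕ) = n then α ^ ((i : ℤ) - (j : ℤ)).natAbs / (1 + α)
    else ((1 - α) / (1 + α)) * α ^ ((i : ℤ) - (j : ℤ)).natAbs

def geomMechanismInv (n : ℕ) (α : K) : Matrix (Fin (n + 1)) (Fin (n + 1)) K :=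
  diagonal (geomWeight n α)⁻¹ * kmsTridiag n α

lemma geomMechanism_eq_kmsMatrix_mul_diagonal (hα : 1 - α ^ 2 ≠ 0) :
    geomMechanism n α = kmsMatrix n α * diagonal (fun j => geomWeight n α j / (1 - α ^ 2)) := by
  have h1 : 1 - α ≠ 0 := fun h => hα (by linear_combination (1 + α) * h)
  have h2 : 1 + α ≠ 0 := fun h => hα (by linear_combination (1 - α) * h)
  ext i j
  rw [mul_diagonal, geomMechanism, kmsMatrix, of_apply, of_apply, geomWeight]
  split_ifs <;> field_simp <;> ring

lemma geomMechanismInv_mul_geomMechanism (hn : 1 ≤ n) (hα : 1 - α ^ 2 ≠ 0)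
    (hw : ∀ j, geomWeight n α j ≠ 0) : geomMechanismInv n α * geomMechanism n α = 1 := by
  rw [geomMechanismInv, geomMechanism_eq_kmsMatrix_mul_diagonal hα, Matrix.mul_assoc,
    ← Matrix.mul_assoc (kmsTridiag n α), kmsTridiag_mul_kmsMatrix hn, Matrix.smul_mul,
    Matrix.one_mul, Matrix.mul_smul, diagonal_mul_diagonal, ← diagonal_smul, ← diagonal_one]
  congr 1
  ext j
  simp only [Pi.smul_apply, Pi.inv_apply, smul_eq_mul]
  field_simp [hw j]

lemma geomMechanismInv_mulVec_one (hn : 1 ≤ n) (hw : ∀ j, geomWeight n α j ≠ 0) :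
    geomMechanismInv n α *ᵥ 1 = 1 := by
  ext j
  rw [geomMechanismInv, ← mulVec_mulVec, kmsTridiag_mulVec_one hn, mulVec_diagonal]
  simp [hw j]

lemma geomMechanismInv_mul_apply (X : Matrix (Fin (n + 1)) (Fin (n + 1)) K) (i j : Fin (n + 1)) :
    (geomMechanismInv n α * X) i j = (geomWeight n α i)⁻¹ * (kmsTridiag n α * X) i j := by
  rw [geomMechanismInv, Matrix.mul_assoc, diagonal_mul, Pi.inv_apply]

end GeomMechanism

lemma geomWeight_pos {K : Type*} [Field K] [LinearOrder K] [IsStrictOrderedRing K] {n : ℕ}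
    {α : K} (h : α < 1) (j : Fin (n + 1)) : 0 < geomWeight n α j := by
  unfold geomWeight
  split_ifs <;> nlinarith

/-- Characterization of mechanisms derivable from the geometric mechanism: a
row-stochastic `M` equals `G_{n,α}·T` for some row-stochastic `T` iff every
three consecutive entries `x₁, x₂, x₃` of every column of `M` satisfy
`(1+α²)·x₂ - α·(x₁+x₃) ≥ 0`, the top two entries of every column satisfy
`x₁ ≥ α·x₂`, and the bottom two satisfy `x_{n+1} ≥ α·x_n`. -/
theorem derivable_from_geometric_iff (n : ℕ) (hn : 2 ≤ n)
    (α : ℝ) (h0 : 0 < α) (h1 : α < 1)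
    (G M : Matrix (Fin (n + 1)) (Fin (n + 1)) ℝ)
    (hG : ∀ i j, G i j =
      if (j : ℕ) = 0 ∨ (j : ℕ) = n then α ^ ((i : ℤ) - (j : ℤ)).natAbs / (1 + α)
      else ((1 - α) / (1 + α)) * α ^ ((i : ℤ) - (j : ℤ)).natAbs)
    (hMrow : ∀ i, ∑ j, M i j = 1) :
    (∃ T : Matrix (Fin (n + 1)) (Fin (n + 1)) ℝ,
        (∀ r r', 0 ≤ T r r') ∧ (∀ r, ∑ r', T r r' = 1) ∧ M = G * T) ↔
    (∀ j : Fin (n + 1),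
      (∀ i : ℕ, (h : i + 2 ≤ n) →
        0 ≤ (1 + α ^ 2) * M ⟨i + 1, by omega⟩ j -
            α * (M ⟨i, by omega⟩ j + M ⟨i + 2, by omega⟩ j)) ∧
      α * M ⟨1, by omega⟩ j ≤ M ⟨0, by omega⟩ j ∧
      α * M ⟨n - 1, by omega⟩ j ≤ M ⟨n, by omega⟩ j) := by
  have hα : 1 - α ^ 2 ≠ 0 := by nlinarith
  have hw : ∀ j, 0 < geomWeight n α j := geomWeight_pos h1
  obtain rfl : G = geomMechanism n α := Matrix.ext hG
  have hM : M *ᵥ 1 = 1 := funext fun i => by simpa [mulVec, dotProduct] using hMrow i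
  rw [← exists_congr fun T => (and_congr_left' mem_rowStochastic_iff_sum).trans and_assoc,
    exists_mem_rowStochastic_mul_eq_iff
      (geomMechanismInv_mul_geomMechanism (by omega) hα fun j => (hw j).ne')
      (geomMechanismInv_mulVec_one (by omega) fun j => (hw j).ne') hM, forall_comm]
  refine forall_congr' fun j => ?_
  simp_rw [geomMechanismInv_mul_apply, mul_nonneg_iff_of_pos_left (inv_pos.2 (hw _))]
  exact forall_nonneg_kmsTridiag_mul_apply_iff (by omega) M j
end
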